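/- Let a, b, c be nonnegative integers and let M be the a×a matrix over ℚ with entries M_{i,j} := C(b+c, b+i−j) for i,j ∈ {1,…,a}. Then M is invertible and the (i,j)-entry of M^{−1} is (−1)^{i+j} · (b+j−1)! · (c+i−1)! · ∑_{k=max(i,j)}^{a} C(k−1, i−1) · C(k−1, j−1) · (b)_{k−i} · (c)_{k−j} / ( (k−1)!·(b+c+k−1)! ). -/

import Mathlib

open Finset

noncomputable section

/-- Binomial coefficient with integer arguments, equal to `0` whenever `k < 0` or `k > n`. -/
def ibinom (n k : ℤ) : ℚ :=
  if 0 ≤ k ∧ k ≤ n then (n.toNat.choose k.toNat : ℚ) else 0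

/-- The Pochhammer symbol (rising factorial) `x (x+1) ⋯ (x+n-1)`. -/
def poch (x : ℚ) (n : ℕ) : ℚ := (ascPochhammer ℚ n).eval x

/-- MacMahon's product `M(a,b,c)`. -/
def macmahon (a b c : ℕ) : ℚ :=
  ∏ i ∈ Finset.range a,
    ((Nat.factorial i : ℚ) * (Nat.factorial (b + c + i) : ℚ)) /
      ((Nat.factorial (b + i) : ℚ) * (Nat.factorial (c + i) : ℚ))

/-- The matrix `Q(a,b,c,d,p)` (with `1`-based indices `i, j ∈ {1, …, a+d}`):
rows/columns with index `≤ a` are lateral, the rest are intrusive. -/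
def Qmat (a b c d : ℕ) (p : ℤ) : Matrix (Fin (a + d)) (Fin (a + d)) ℚ :=
  Matrix.of fun i j =>
    if (i : ℕ) < a then
      if (j : ℕ) < a then
        ibinom ((b : ℤ) + c) ((c : ℤ) - (((i : ℕ) : ℤ) + 1) + (((j : ℕ) : ℤ) + 1))
      else
        ibinom (2 * (((j : ℕ) : ℤ) - a + 1) - 1)
          ((((j : ℕ) : ℤ) - a + 1) - (((i : ℕ) : ℤ) + 1) + p)
    else
      if (j : ℕ) < a then
        ibinom ((b : ℤ) + c - 2 * (((i : ℕ) : ℤ) - a + 1) + 1)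
          ((c : ℤ) - (((i : ℕ) : ℤ) - a + 1) + (((j : ℕ) : ℤ) + 1) - p)
      else
        ibinom (2 * (((j : ℕ) : ℤ) - ((i : ℕ) : ℤ))) (((j : ℕ) : ℤ) - ((i : ℕ) : ℤ))

/-- `E(a,b,c,d,p) = det Q(a,b,c,d,p)`, the signed count of lozenge tilings of the
`(a,b,c)`-hexagon with an even intrusion of length `d` at position `p`. -/
def E (a b c d : ℕ) (p : ℤ) : ℚ := (Qmat a b c d p).det

/-!
The matrix factors as `M = E_c · T_cᵀ · W · T_b · E_b`, where `T_x` is the upper unitriangular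
Toeplitz matrix `(C(x, j - i))`, `W = diag C(b+c+k, k)` and `E_c`, `E_b` are diagonal; entrywise
this is Surányi's identity `∑ₖ C(b+c+k, k) C(c, i-k) C(b, j-k) = C(b+i, j) C(c+j, i)`.
Chu–Vandermonde gives `T_x T_{-x} = T_0 = 1`, hence `M⁻¹ = E_b⁻¹ T_{-b} W⁻¹ T_{-c}ᵀ E_c⁻¹`, and
expanding with `C(-x, m) = (-1)^m (x)_m / m!` yields the stated sums.
-/

open Matrix Nat

section Toeplitz

variable {R : Type*}

def upperToeplitz [Zero R] (n : ℕ) (u : ℕ → R) : Matrix (Fin n) (Fin n) R :=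
  of fun i j => if (i : ℕ) ≤ j then u (j - i) else 0

theorem upperToeplitz_mul [Semiring R] {n : ℕ} (u v w : ℕ → R)
    (hw : ∀ d, w d = ∑ p ∈ antidiagonal d, u p.1 * v p.2) :
    upperToeplitz n u * upperToeplitz n v = upperToeplitz n w := by
  ext i l
  let f (j : ℕ) : R := if (i : ℕ) ≤ j ∧ j ≤ l then u (j - i) * v (l - j) else 0
  have hf : (upperToeplitz n u * upperToeplitz n v) i l = ∑ j ∈ range n, f j := by
    rw [mul_apply, ← Fin.sum_univ_eq_sum_range f]
    refine sum_congr rfl fun j _ => ?_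
    simp only [upperToeplitz, of_apply, f]
    split_ifs <;> first | rfl | omega | simp
  rw [hf]
  simp only [upperToeplitz, of_apply]
  split_ifs with hil
  · have hsub : Ico (i : ℕ) (l + 1) ⊆ range n := fun j hj => by
      simp only [mem_Ico, mem_range] at hj ⊢; omega
    rw [← sum_subset hsub fun j _ hj => if_neg (by simpa using hj), sum_Ico_eq_sum_range, hw,
      Nat.sum_antidiagonal_eq_sum_range_succ (fun p q => u p * v q), Nat.succ_eq_add_one,
      show (l : ℕ) + 1 - i = l - i + 1 by omega]
    refine sum_congr rfl fun m hm => ?_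
    have hm := mem_range.mp hm
    simp only [if_pos (show (i : ℕ) ≤ i + m ∧ i + m ≤ l by omega), Nat.add_sub_cancel_left,
      Nat.sub_add_eq, Nat.sub_right_comm]
  · exact sum_eq_zero fun j _ => if_neg (by omega)

theorem upperToeplitz_eq_one [Semiring R] {n : ℕ} (u : ℕ → R)
    (hu : ∀ d, u d = if d = 0 then 1 else 0) : upperToeplitz n u = 1 := by
  ext i j
  simp only [upperToeplitz, of_apply, one_apply, hu, Fin.ext_iff]
  split_ifs <;> first | rfl | omega

theorem upperToeplitz_choose_mul_choose_neg [Ring R] [BinomialRing R] {n : ℕ} (r : R) :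
    upperToeplitz n (Ring.choose r) * upperToeplitz n (Ring.choose (-r)) = 1 := by
  rw [upperToeplitz_mul _ _ (Ring.choose (r + -r))
      fun d => Ring.add_choose_eq d ((Commute.refl r).neg_right),
    add_neg_cancel, upperToeplitz_eq_one _ (Ring.choose_zero_ite R)]

end Toeplitz

theorem sum_fin_ite_le_eq_sum_Icc {M : Type*} [AddCommMonoid M] (a m : ℕ) (f : ℕ → M) :
    ∑ k : Fin a, (if m ≤ (k : ℕ) then f k else 0) = ∑ k ∈ Icc (m + 1) a, f (k - 1) := by
  rw [Fin.sum_univ_eq_sum_range (fun k => if m ≤ k then f k else 0), ← sum_filter,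
    show (range a).filter (m ≤ ·) = Ico m a by ext; simp; omega, ← Ico_add_one_right_eq_Icc,
    ← sum_Ico_add' (fun k => f (k - 1))]
  simp

theorem neg_one_pow_sub_mul_neg_one_pow_sub {R : Type*} [Ring R] {i j k : ℕ} (hi : i ≤ k)
    (hj : j ≤ k) : (-1 : R) ^ (k - i) * (-1) ^ (k - j) = (-1) ^ (i + j) := by
  obtain ⟨p, rfl⟩ := Nat.exists_eq_add_of_le hi
  obtain ⟨q, hq⟩ := Nat.exists_eq_add_of_le hj
  rw [Nat.add_sub_cancel_left, hq, Nat.add_sub_cancel_left, ← pow_add,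
    neg_one_pow_eq_pow_mod_two, neg_one_pow_eq_pow_mod_two (i + j),
    show (p + q) % 2 = (i + j) % 2 by omega]

theorem diagonal_mul_diagonal_eq_one {n R : Type*} [Fintype n] [DecidableEq n] [Semiring R]
    {d e : n → R} (h : ∀ i, d i * e i = 1) : diagonal d * diagonal e = 1 := by
  rw [diagonal_mul_diagonal, ← diagonal_one]
  exact congrArg diagonal (funext h)

/-- `C(n, m - k)` with the difference taken in `ℤ`, i.e. `0` when `m < k` (rather than
`C(n, 0) = 1`, which truncated subtraction would give). -/
def chooseSub (n m k : ℕ) : ℕ := if k ≤ m then n.choose (m - k) else 0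

theorem chooseSub_succ_succ (n m k : ℕ) : chooseSub n (m + 1) (k + 1) = chooseSub n m k := by
  simp [chooseSub]

theorem chooseSub_succ_left (n m k : ℕ) :
    chooseSub (n + 1) (m + 1) k = chooseSub n (m + 1) k + chooseSub n m k := by
  unfold chooseSub
  rcases lt_trichotomy k (m + 1) with h | rfl | h
  · rw [if_pos h.le, if_pos h.le, if_pos (by omega), show m + 1 - k = m - k + 1 by omega,
      Nat.choose_succ_succ']
    ring
  · simp
  · rw [if_neg (by omega), if_neg (by omega), if_neg (by omega)]

theorem chooseSub_zero_right (n m : ℕ) : chooseSub n m 0 = n.choose m := by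
  simp [chooseSub]

theorem chooseSub_zero_left (m k : ℕ) : chooseSub 0 m k = if k = m then 1 else 0 := by
  unfold chooseSub
  split_ifs with hkm hkm'
  · simp [hkm']
  · exact Nat.choose_eq_zero_of_lt (by omega)
  · omega
  · rfl

theorem chooseSub_zero_mid (n k : ℕ) : chooseSub n 0 k = if k = 0 then 1 else 0 := by
  unfold chooseSub
  split_ifs <;> first | rfl | omega | simp_all

def suranyiTerm (b c i j k : ℕ) : ℕ := (b + c + k).choose k * chooseSub c i k * chooseSub b j k

def suranyiSum (b c i j : ℕ) : ℕ := ∑ k ∈ range (i + 1), suranyiTerm b c i j k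

theorem suranyiTerm_succ (b c i j k : ℕ) :
    suranyiTerm (b + 1) c (i + 1) (j + 1) (k + 1) =
      suranyiTerm (b + 1) c i j k + suranyiTerm b c (i + 1) (j + 1) (k + 1) +
        suranyiTerm b c (i + 1) j (k + 1) := by
  unfold suranyiTerm
  rw [show b + 1 + c + (k + 1) = b + c + (k + 1) + 1 by omega, Nat.choose_succ_succ', add_mul,
    add_mul]
  nth_rewrite 1 [chooseSub_succ_succ (b + 1)]
  rw [chooseSub_succ_left b j, chooseSub_succ_succ c, show b + c + (k + 1) = b + 1 + c + k by omega]
  ring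

theorem suranyiSum_succ (b c i j : ℕ) :
    suranyiSum (b + 1) c (i + 1) (j + 1) =
      suranyiSum (b + 1) c i j + suranyiSum b c (i + 1) (j + 1) + suranyiSum b c (i + 1) j := by
  simp only [suranyiSum, sum_range_succ' _ (i + 1), suranyiTerm_succ, sum_add_distrib]
  simp only [suranyiTerm, chooseSub_zero_right, Nat.choose_zero_right, Nat.choose_succ_succ' b j]
  ring

theorem suranyi (b c i j : ℕ) : suranyiSum b c i j = (b + i).choose j * (c + j).choose i := by
  induction b generalizing i j with
  | zero =>
    simp only [suranyiSum, suranyiTerm, chooseSub_zero_left, mul_ite, mul_one, mul_zero,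
      sum_ite_eq', mem_range, zero_add]
    split_ifs with hji
    · have h := Nat.choose_mul (n := c + j) (show j ≤ i by omega)
      rw [Nat.add_sub_cancel] at h
      rw [chooseSub, if_pos (by omega), mul_comm (i.choose j), h]
    · rw [Nat.choose_eq_zero_of_lt (by omega), zero_mul]
  | succ b ihb =>
    induction i generalizing j with
    | zero => simp [suranyiSum, suranyiTerm, chooseSub_zero_right]
    | succ i ihi =>
      cases j with
      | zero => simp [suranyiSum, suranyiTerm, chooseSub_zero_mid, chooseSub_zero_right]
      | succ j =>
        rw [suranyiSum_succ, ihi, ihb, ihb, show b + 1 + (i + 1) = b + 1 + i + 1 by omega,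
          show c + (j + 1) = c + j + 1 by omega, Nat.choose_succ_succ' (b + 1 + i),
          Nat.choose_succ_succ' (c + j), show b + (i + 1) = b + 1 + i by omega]
        ring

theorem choose_neg_eq_poch (x : ℚ) (m : ℕ) : Ring.choose (-x) m = (-1) ^ m * poch x m / m ! := by
  have h := Ring.factorial_nsmul_multichoose_eq_ascPochhammer x m
  rw [Polynomial.ascPochhammer_smeval_eq_eval, nsmul_eq_mul] at h
  rw [Ring.choose_neg', Units.smul_def, zsmul_eq_mul, Int.cast_negOnePow, zpow_natCast, poch, ← h]
  field_simp

theorem upperToeplitz_natCast_choose_apply (n c : ℕ) (k i : Fin n) :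
    upperToeplitz n (Ring.choose (c : ℚ)) k i = chooseSub c i k := by
  simp only [upperToeplitz, of_apply, chooseSub, Ring.choose_natCast]
  split_ifs <;> simp

theorem ibinom_natCast (n k : ℕ) : ibinom n k = n.choose k := by
  unfold ibinom
  split_ifs with h
  · simp
  · rw [Nat.choose_eq_zero_of_lt (by omega), Nat.cast_zero]

theorem ibinom_eq_mul_choose_mul_choose (b c i j : ℕ) :
    ibinom ((b : ℤ) + c) ((b : ℤ) + ((i : ℤ) + 1) - ((j : ℤ) + 1)) =
      (b + c)! * i ! / (b + i)! * ((b + i).choose j * (c + j).choose i) * (j ! / (c + j)!) := by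
  rcases lt_or_ge (b + i) j with hj | hj
  · rw [ibinom, if_neg (by omega), Nat.choose_eq_zero_of_lt hj]
    simp
  rw [show (b : ℤ) + ((i : ℤ) + 1) - ((j : ℤ) + 1) = ((b + i - j : ℕ) : ℤ) by push_cast [hj]; ring,
    ← Nat.cast_add, ibinom_natCast]
  rcases lt_or_ge (c + j) i with hi | hi
  · rw [Nat.choose_eq_zero_of_lt (by omega), Nat.choose_eq_zero_of_lt hi]
    simp
  rw [Nat.cast_choose ℚ (show b + i - j ≤ b + c by omega), Nat.cast_choose ℚ hj,
    Nat.cast_choose ℚ hi, show b + c - (b + i - j) = c + j - i by omega]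
  field_simp

def macmahonMatrix (a b c : ℕ) : Matrix (Fin a) (Fin a) ℚ :=
  of fun i j => ibinom ((b : ℤ) + c) ((b : ℤ) + (((i : ℕ) : ℤ) + 1) - (((j : ℕ) : ℤ) + 1))

theorem macmahonMatrix_eq_ldu (a b c : ℕ) :
    macmahonMatrix a b c =
      diagonal (fun i : Fin a => ((b + c)! : ℚ) * (i : ℕ)! / (b + i)!) *
        (upperToeplitz a (Ring.choose (c : ℚ)))ᵀ *
        diagonal (fun k : Fin a => ((b + c + k).choose k : ℚ)) *
        upperToeplitz a (Ring.choose (b : ℚ)) *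
        diagonal (fun j : Fin a => ((j : ℕ)! : ℚ) / (c + j)!) := by
  ext i j
  have hsum : ∑ k : Fin a, upperToeplitz a (Ring.choose (c : ℚ)) k i *
      ((b + c + k).choose k : ℚ) * upperToeplitz a (Ring.choose (b : ℚ)) k j =
      ((b + i).choose j : ℚ) * (c + j).choose i := by
    rw [← Nat.cast_mul, ← suranyi]
    simp only [upperToeplitz_natCast_choose_apply, suranyiSum, suranyiTerm, Nat.cast_sum,
      Nat.cast_mul]
    rw [Fin.sum_univ_eq_sum_range (fun k => (chooseSub c i k : ℚ) * ((b + c + k).choose k : ℚ) *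
      (chooseSub b j k : ℚ)), ← sum_subset (range_subset_range.mpr (show (i : ℕ) + 1 ≤ a by omega))]
    · exact sum_congr rfl fun k _ => by ring
    · intro k _ hk
      rw [chooseSub, if_neg (by simpa using hk)]
      simp
  rw [macmahonMatrix, of_apply, mul_diagonal, mul_apply]
  simp only [mul_diagonal, diagonal_mul, transpose_apply]
  rw [ibinom_eq_mul_choose_mul_choose, ← hsum, mul_sum]
  exact congrArg (· * _) (sum_congr rfl fun k _ => by ring)

def macmahonInv (a b c : ℕ) : Matrix (Fin a) (Fin a) ℚ :=
  diagonal (fun j : Fin a => ((c + j)! : ℚ) / (j : ℕ)!) * upperToeplitz a (Ring.choose (-b : ℚ)) *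
    diagonal (fun k : Fin a => ((b + c + k).choose k : ℚ)⁻¹) *
    (upperToeplitz a (Ring.choose (-c : ℚ)))ᵀ *
    diagonal (fun i : Fin a => ((b + i)! : ℚ) / ((b + c)! * (i : ℕ)!))

theorem macmahonMatrix_mul_macmahonInv (a b c : ℕ) :
    macmahonMatrix a b c * macmahonInv a b c = 1 := by
  have hb := upperToeplitz_choose_mul_choose_neg (n := a) (b : ℚ)
  have hc := mul_eq_one_comm.mp (upperToeplitz_choose_mul_choose_neg (n := a) (c : ℚ))
  have hfact (n : ℕ) : (n ! : ℚ) ≠ 0 := by positivity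
  have hchoose (k : ℕ) : ((b + c + k).choose k : ℚ) ≠ 0 := by
    exact_mod_cast (Nat.choose_pos (by omega)).ne'
  rw [macmahonMatrix_eq_ldu, macmahonInv]
  simp only [Matrix.mul_assoc]
  rw [← Matrix.mul_assoc (diagonal _) (diagonal _),
    diagonal_mul_diagonal_eq_one fun j => by field_simp [hfact], Matrix.one_mul,
    ← Matrix.mul_assoc (upperToeplitz a _), hb, Matrix.one_mul,
    ← Matrix.mul_assoc (diagonal _) (diagonal _),
    diagonal_mul_diagonal_eq_one fun k : Fin a => mul_inv_cancel₀ (hchoose k), Matrix.one_mul,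
    ← Matrix.mul_assoc (upperToeplitz a _)ᵀ, ← transpose_mul, hc, transpose_one, Matrix.one_mul,
    diagonal_mul_diagonal_eq_one fun i => by field_simp [hfact]]

theorem macmahonInv_apply (a b c : ℕ) (i j : Fin a) :
    macmahonInv a b c i j =
      (-1 : ℚ) ^ ((i : ℕ) + (j : ℕ)) * (b + j)! * (c + i)! *
        ∑ k ∈ Icc (max ((i : ℕ) + 1) ((j : ℕ) + 1)) a,
          ((k - 1).choose i : ℚ) * ((k - 1).choose j : ℚ) *
            poch b (k - ((i : ℕ) + 1)) * poch c (k - ((j : ℕ) + 1)) /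
            ((k - 1)! * (b + c + k - 1)!) := by
  set summand : ℕ → ℚ := fun k => (k.choose i : ℚ) * (k.choose j : ℚ) * poch b (k - i) *
    poch c (k - j) / (k ! * (b + c + k)!)
  have hterm : ∀ k : Fin a,
      ((c + i)! : ℚ) / (i : ℕ)! * upperToeplitz a (Ring.choose (-b : ℚ)) i k *
          ((b + c + k).choose k : ℚ)⁻¹ * upperToeplitz a (Ring.choose (-c : ℚ)) j k *
          (((b + j)! : ℚ) / ((b + c)! * (j : ℕ)!)) =
        if max (i : ℕ) j ≤ k then
          (-1 : ℚ) ^ ((i : ℕ) + (j : ℕ)) * (b + j)! * (c + i)! * summand k else 0 := by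
    intro k
    simp only [upperToeplitz, of_apply]
    by_cases hk : max (i : ℕ) j ≤ k
    · have hi : (i : ℕ) ≤ k := le_of_max_le_left hk
      have hj : (j : ℕ) ≤ k := le_of_max_le_right hk
      rw [if_pos hi, if_pos hj, if_pos hk, choose_neg_eq_poch, choose_neg_eq_poch,
        ← neg_one_pow_sub_mul_neg_one_pow_sub hi hj]
      simp only [summand]
      rw [Nat.cast_choose ℚ hi, Nat.cast_choose ℚ hj,
        Nat.cast_choose ℚ (show (k : ℕ) ≤ b + c + k by omega), Nat.add_sub_cancel]
      field_simp
    · rw [if_neg hk]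
      rcases not_and_or.mp (max_le_iff.not.mp hk) with h | h <;> simp [h]
  rw [macmahonInv, mul_diagonal, mul_apply]
  simp only [mul_diagonal, diagonal_mul, transpose_apply]
  rw [sum_mul, sum_congr rfl fun k _ => hterm k, sum_fin_ite_le_eq_sum_Icc a _
    fun k => (-1 : ℚ) ^ ((i : ℕ) + j) * (b + j)! * (c + i)! * summand k, mul_sum,
    Nat.add_max_add_right]
  refine sum_congr rfl fun k hk => ?_
  have hk1 : 1 ≤ k := by have := (mem_Icc.mp hk).1; omega
  simp only [summand]
  rw [show k - 1 - (i : ℕ) = k - ((i : ℕ) + 1) by omega,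
    show k - 1 - (j : ℕ) = k - ((j : ℕ) + 1) by omega,
    show b + c + (k - 1) = b + c + k - 1 by omega]

/-- Entrywise formula for the inverse of MacMahon's matrix. -/
theorem macmahon_inverse_entry (a b c : ℕ) :
    let M : Matrix (Fin a) (Fin a) ℚ := Matrix.of fun i j =>
      ibinom ((b : ℤ) + c) ((b : ℤ) + (((i : ℕ) : ℤ) + 1) - (((j : ℕ) : ℤ) + 1))
    IsUnit M.det ∧
      ∀ i j : Fin a,
        M⁻¹ i j =
          (-1 : ℚ) ^ ((i : ℕ) + (j : ℕ)) * (Nat.factorial (b + (j : ℕ)) : ℚ) *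
              (Nat.factorial (c + (i : ℕ)) : ℚ) *
            ∑ k ∈ Finset.Icc (max ((i : ℕ) + 1) ((j : ℕ) + 1)) a,
              (Nat.choose (k - 1) (i : ℕ) : ℚ) * (Nat.choose (k - 1) (j : ℕ) : ℚ) *
                poch (b : ℚ) (k - ((i : ℕ) + 1)) * poch (c : ℚ) (k - ((j : ℕ) + 1)) /
                ((Nat.factorial (k - 1) : ℚ) * (Nat.factorial (b + c + k - 1) : ℚ)) := by
  intro M
  have hright : M * macmahonInv a b c = 1 := macmahonMatrix_mul_macmahonInv a b c
  exact ⟨isUnit_det_of_right_inverse hright, fun i j => by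
    rw [inv_eq_right_inv hright, macmahonInv_apply]⟩
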